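/- Bias of the correlated-components estimator (A2 case): with Λ, S₋, A₋, Φ₋ = (S₋ᴴΛS₋+A₋)⁻¹ as above, ς⁻¹ = sᴴΛs - sᴴΛS₋Φ₋S₋ᴴΛs, and the noiseless data y = S₋w₋ + w s, the quantity μ = ς sᴴΛ y - ς sᴴΛ S₋ Φ₋ S₋ᴴ Λ y satisfies μ = ς sᴴ(Λ⁻¹ + S₋A₋⁻¹S₋ᴴ)⁻¹ S₋ w₋ + w. -/
import Mathlib


open Matrix ComplexOrder

private lemma aux_mid {R : Type*} [Ring R] (Ai X A Φ : R)
    (hBΦ : (X + A) * Φ = 1) (hAinv : Ai * A = 1) :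
    Ai * X * Φ = Ai - Φ := by
  have h : Ai * X * Φ = Ai * ((X + A) * Φ) - (Ai * A) * Φ := by noncomm_ring
  rw [h, hBΦ, hAinv, mul_one, one_mul]

set_option maxHeartbeats 1000000 in
/-- Bias of the correlated-components (A2) estimator: with `Φ₋ = (S₋ᴴΛS₋+A₋)⁻¹`,
`ς` the inverse of `sᴴΛs - sᴴΛS₋Φ₋S₋ᴴΛs`, and noiseless data `y = S₋w₋ + w•s`,
the weight estimate `μ = ς sᴴΛy - ς sᴴΛS₋Φ₋S₋ᴴΛy` satisfies
`μ = ς sᴴ(Λ⁻¹ + S₋A₋⁻¹S₋ᴴ)⁻¹ S₋ w₋ + w`. -/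
theorem stmt_12 {N M : ℕ} (s : Fin N → ℂ)
    (Λ : Matrix (Fin N) (Fin N) ℂ) (hΛ : Λ.PosDef)
    (Sm : Matrix (Fin N) (Fin M) ℂ)
    (Am : Fin M → ℝ) (hAm : ∀ l, 0 < Am l)
    (Φm : Matrix (Fin M) (Fin M) ℂ)
    (hΦm : Φm = (Smᴴ * Λ * Sm + Matrix.diagonal (fun l => (Am l : ℂ)))⁻¹)
    (ς : ℂ)
    (hς : ς * (star s ⬝ᵥ Λ.mulVec s - star s ⬝ᵥ (Λ * Sm * Φm * Smᴴ * Λ).mulVec s) = 1)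
    (wm : Fin M → ℂ) (w : ℂ) (y : Fin N → ℂ) (hy : y = Sm.mulVec wm + w • s) :
    ς * (star s ⬝ᵥ Λ.mulVec y) - ς * (star s ⬝ᵥ (Λ * Sm * Φm * Smᴴ * Λ).mulVec y)
      = ς * (star s ⬝ᵥ
          ((Λ⁻¹ + Sm * (Matrix.diagonal (fun l => (Am l : ℂ)))⁻¹ * Smᴴ)⁻¹).mulVec
            (Sm.mulVec wm)) + w := by
  set A : Matrix (Fin M) (Fin M) ℂ := Matrix.diagonal (fun l => (Am l : ℂ)) with hA
  have hApos : A.PosDef := Matrix.PosDef.diagonal fun l => by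
    simpa using (hAm l)
  have hBpos : (Smᴴ * Λ * Sm + A).PosDef :=
    Matrix.PosDef.posSemidef_add
      (by simpa [Matrix.mul_assoc] using hΛ.posSemidef.conjTranspose_mul_mul_same Sm) hApos
  have hΛinv : Λ⁻¹ * Λ = 1 :=
    Matrix.nonsing_inv_mul _ (Matrix.isUnit_iff_isUnit_det _ |>.1 hΛ.isUnit)
  have hAinv : A⁻¹ * A = 1 := Matrix.nonsing_inv_mul _
    (Matrix.isUnit_iff_isUnit_det _ |>.1 hApos.isUnit)
  have hBΦ : (Smᴴ * Λ * Sm + A) * Φm = 1 := by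
    rw [hΦm]
    exact Matrix.mul_nonsing_inv _ (Matrix.isUnit_iff_isUnit_det _ |>.1 hBpos.isUnit)
  -- key algebraic fact: A⁻¹ * (SᴴΛS) * Φ = A⁻¹ - Φ
  have hmid : A⁻¹ * (Smᴴ * Λ * Sm) * Φm = A⁻¹ - Φm :=
    aux_mid A⁻¹ (Smᴴ * Λ * Sm) A Φm hBΦ hAinv
  -- Woodbury-type identity
  have key : (Λ⁻¹ + Sm * A⁻¹ * Smᴴ) * (Λ - Λ * Sm * Φm * Smᴴ * Λ) = 1 := by
    have e1 : Λ⁻¹ * (Λ * (Sm * (Φm * (Smᴴ * Λ)))) = Sm * (Φm * (Smᴴ * Λ)) := by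
      rw [← Matrix.mul_assoc, hΛinv, Matrix.one_mul]
    have e2 : A⁻¹ * (Smᴴ * (Λ * Sm)) * Φm = A⁻¹ - Φm := by
      simpa only [Matrix.mul_assoc] using hmid
    calc (Λ⁻¹ + Sm * A⁻¹ * Smᴴ) * (Λ - Λ * Sm * Φm * Smᴴ * Λ)
        = Λ⁻¹ * Λ - Λ⁻¹ * (Λ * (Sm * (Φm * (Smᴴ * Λ))))
            + (Sm * (A⁻¹ * (Smᴴ * Λ))
              - Sm * ((A⁻¹ * (Smᴴ * (Λ * Sm)) * Φm) * (Smᴴ * Λ))) := by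
          simp only [Matrix.add_mul, Matrix.mul_sub, Matrix.mul_assoc]
          abel
      _ = 1 - Sm * (Φm * (Smᴴ * Λ))
            + (Sm * (A⁻¹ * (Smᴴ * Λ)) - Sm * ((A⁻¹ - Φm) * (Smᴴ * Λ))) := by
          rw [hΛinv, e1, e2]
      _ = 1 := by
          rw [Matrix.sub_mul, Matrix.mul_sub]
          abel
  have hinv : (Λ⁻¹ + Sm * A⁻¹ * Smᴴ)⁻¹ = Λ - Λ * Sm * Φm * Smᴴ * Λ :=
    Matrix.inv_eq_right_inv key
  set K : Matrix (Fin N) (Fin N) ℂ := Λ - Λ * Sm * Φm * Smᴴ * Λ with hK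
  have hKs : ς * (star s ⬝ᵥ K.mulVec s) = 1 := by
    rw [hK, Matrix.sub_mulVec, dotProduct_sub]; exact hς
  rw [hinv, hy]
  have expand : K.mulVec (Sm.mulVec wm + w • s)
      = K.mulVec (Sm.mulVec wm) + w • K.mulVec s := by
    rw [Matrix.mulVec_add, Matrix.mulVec_smul]
  calc ς * (star s ⬝ᵥ Λ.mulVec (Sm.mulVec wm + w • s))
        - ς * (star s ⬝ᵥ (Λ * Sm * Φm * Smᴴ * Λ).mulVec (Sm.mulVec wm + w • s))
      = ς * (star s ⬝ᵥ K.mulVec (Sm.mulVec wm + w • s)) := by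
        rw [hK, Matrix.sub_mulVec, dotProduct_sub]; ring
    _ = ς * (star s ⬝ᵥ K.mulVec (Sm.mulVec wm)) + w * (ς * (star s ⬝ᵥ K.mulVec s)) := by
        rw [expand, dotProduct_add, dotProduct_smul, smul_eq_mul]; ring
    _ = ς * (star s ⬝ᵥ K.mulVec (Sm.mulVec wm)) + w := by rw [hKs, mul_one]
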